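/- Let (M,T^{1,0}) be a nondegenerate partially integrable almost CR manifold, {Z_α} a local frame of T^{1,0}, and μ_α{}^{β̄} a tensor field; set Ẑ_α := Z_α + μ_α{}^{β̄} Z_{β̄}, which defines a new almost CR structure on M with the same contact distribution H. Then the new almost CR structure is partially integrable if and only if μ_{αβ} = μ_{βα}, where the index is lowered by the Levi form of (M,T^{1,0}) associated to any pseudohermitian structure. -/

import Mathlib

/-!
In `θ([Ẑ_α, Ẑ_β])` the terms `θ([Z_α, Z_β])` and `θ([Z_ᾱ, Z_β̄])` vanish by partial
integrability of `T^{1,0}`, and derivatives of the coefficients `μ` drop out because `θ`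
annihilates the frame. What is left is the bilinear part
`μ_β{}^{δ̄} θ([Z_α, Z_δ̄]) - μ_α{}^{γ̄} θ([Z_β, Z_γ̄]) = i (μ_{αβ} - μ_{βα})`.
-/

/-- An abstract model of a nondegenerate partially integrable almost CR manifold with a
pseudohermitian structure `θ` and a local frame `{Z_α}` of `T^{1,0}` with conjugate
frame `{Z_ᾱ}`. -/
structure CRDeformationFrame (n : ℕ) (M : Type*) (VC : Type*)
    [AddCommGroup VC] [Module (M → ℂ) VC] where
  /-- the Lie bracket of complexified vector fields -/
  bracket : VC → VC → VC
  /-- action of complexified vector fields on functions -/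
  act : VC → (M → ℂ) → (M → ℂ)
  bracket_add_left : ∀ X Y Z, bracket (X + Y) Z = bracket X Z + bracket Y Z
  bracket_antisymm : ∀ X Y, bracket X Y = -bracket Y X
  bracket_smul_right : ∀ X (f : M → ℂ) Y,
    bracket X (f • Y) = f • bracket X Y + act X f • Y
  /-- the pseudohermitian structure `θ` (complexified), annihilating
  `T^{1,0} ⊕ conj T^{1,0}` -/
  theta : VC → M → ℂ
  theta_add : ∀ X Y, theta (X + Y) = theta X + theta Y
  theta_smul : ∀ (f : M → ℂ) X, theta (f • X) = f * theta X
  /-- the frame of `T^{1,0}` -/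
  Z : Fin n → VC
  /-- its conjugate frame `Z_ᾱ = conj Z_α`, spanning `conj T^{1,0}` -/
  Zb : Fin n → VC
  theta_Z : ∀ α, theta (Z α) = 0
  theta_Zb : ∀ α, theta (Zb α) = 0
  /-- partial integrability of `(M, T^{1,0})` -/
  partialInt : ∀ α β, theta (bracket (Z α) (Z β)) = 0
  partialIntBar : ∀ α β, theta (bracket (Zb α) (Zb β)) = 0
  /-- nondegeneracy: the Levi form `h_{αβ̄} = iθ([Z_α, Z_β̄])` is nondegenerate -/
  nondeg : ∀ p : M,
    (Matrix.of fun α β : Fin n => Complex.I * theta (bracket (Z α) (Zb β)) p).det ≠ 0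

namespace CRDeformationFrame

variable {n : ℕ} {M VC : Type*} [AddCommGroup VC] [Module (M → ℂ) VC]
variable (F : CRDeformationFrame n M VC)

/-- the Levi form `h_{αβ̄} = iθ([Z_α, Z_β̄])` associated to `θ` -/
noncomputable def leviC (α β : Fin n) : M → ℂ := fun p =>
  Complex.I * F.theta (F.bracket (F.Z α) (F.Zb β)) p

/-- the frame `Ẑ_α = Z_α + μ_α{}^{β̄} Z_β̄` of the deformed almost CR structure -/
noncomputable def Zhat (μ : Fin n → Fin n → M → ℂ) (α : Fin n) : VC :=
  F.Z α + ∑ β, μ α β • F.Zb β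

/-- `μ_{αβ} = μ_α{}^{γ̄} h_{βγ̄}` (index lowered by the Levi form) -/
noncomputable def lowerMu (μ : Fin n → Fin n → M → ℂ) (α β : Fin n) : M → ℂ := fun p =>
  ∑ γ, μ α γ p * F.leviC β γ p

end CRDeformationFrame

namespace CRDeformationFrame

variable {n : ℕ} {M VC : Type*} [AddCommGroup VC] [Module (M → ℂ) VC]
variable (F : CRDeformationFrame n M VC)

def thetaHom : VC →+ (M → ℂ) := AddMonoidHom.mk' F.theta F.theta_add

theorem bracket_add_right (X Y Z : VC) :
    F.bracket X (Y + Z) = F.bracket X Y + F.bracket X Z := by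
  rw [F.bracket_antisymm, F.bracket_add_left, F.bracket_antisymm Y X,
    F.bracket_antisymm Z X, neg_add, neg_neg, neg_neg]

def bracketRight (X : VC) : VC →+ VC := AddMonoidHom.mk' (F.bracket X) (F.bracket_add_right X)

theorem theta_neg (X : VC) : F.theta (-X) = -F.theta X :=
  map_neg F.thetaHom X

theorem theta_bracket_smul_Zb (X : VC) (f : M → ℂ) (δ : Fin n) :
    F.theta (F.bracket X (f • F.Zb δ)) = f * F.theta (F.bracket X (F.Zb δ)) := by
  rw [F.bracket_smul_right, F.theta_add, F.theta_smul, F.theta_smul, F.theta_Zb, mul_zero,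
    add_zero]

theorem theta_bracket_sum_smul_Zb (X : VC) (c : Fin n → M → ℂ) :
    F.theta (F.bracket X (∑ δ, c δ • F.Zb δ)) = ∑ δ, c δ * F.theta (F.bracket X (F.Zb δ)) := by
  refine (map_sum (F.thetaHom.comp (F.bracketRight X)) (fun δ => c δ • F.Zb δ) _).trans ?_
  exact Finset.sum_congr rfl fun δ _ => F.theta_bracket_smul_Zb X (c δ) δ

theorem theta_bracket_sum_smul_Zb_left (c : Fin n → M → ℂ) (Y : VC) :
    F.theta (F.bracket (∑ γ, c γ • F.Zb γ) Y) = -∑ γ, c γ * F.theta (F.bracket Y (F.Zb γ)) := by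
  rw [F.bracket_antisymm, F.theta_neg, F.theta_bracket_sum_smul_Zb]

theorem theta_bracket_sum_smul_Zb_sum_smul_Zb (c d : Fin n → M → ℂ) :
    F.theta (F.bracket (∑ γ, c γ • F.Zb γ) (∑ δ, d δ • F.Zb δ)) = 0 := by
  have h : ∀ γ, F.theta (F.bracket (∑ δ, d δ • F.Zb δ) (F.Zb γ)) = 0 := fun γ => by
    rw [F.theta_bracket_sum_smul_Zb_left]
    simp [F.partialIntBar]
  rw [F.theta_bracket_sum_smul_Zb_left, Finset.sum_eq_zero fun γ _ => by rw [h, mul_zero],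
    neg_zero]

theorem theta_bracket_Zhat (μ : Fin n → Fin n → M → ℂ) (α β : Fin n) :
    F.theta (F.bracket (F.Zhat μ α) (F.Zhat μ β)) =
      Complex.I • (F.lowerMu μ α β - F.lowerMu μ β α) := by
  have expand : F.theta (F.bracket (F.Zhat μ α) (F.Zhat μ β)) =
      ∑ δ, μ β δ * F.theta (F.bracket (F.Z α) (F.Zb δ))
        - ∑ γ, μ α γ * F.theta (F.bracket (F.Z β) (F.Zb γ)) := by
    rw [Zhat, Zhat, F.bracket_add_left, F.bracket_add_right, F.bracket_add_right, F.theta_add,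
      F.theta_add, F.theta_add, F.partialInt, F.theta_bracket_sum_smul_Zb,
      F.theta_bracket_sum_smul_Zb_left, F.theta_bracket_sum_smul_Zb_sum_smul_Zb]
    abel
  ext p
  simp only [expand, lowerMu, leviC, Pi.sub_apply, Pi.smul_apply, Finset.sum_apply,
    Pi.mul_apply, smul_eq_mul, mul_sub, Finset.mul_sum]
  have hI : ∀ a b : ℂ, Complex.I * (a * (Complex.I * b)) = -(a * b) := fun a b => by
    linear_combination (a * b) * Complex.I_mul_I
  simp only [hI, Finset.sum_neg_distrib, neg_sub_neg]

end CRDeformationFrame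

/-- **Proposition 6.1.**  The almost CR structure spanned by
`Ẑ_α = Z_α + μ_α{}^{β̄}Z_β̄` is partially integrable iff `μ_{αβ} = μ_{βα}`. -/
theorem deformed_structure_partially_integrable_iff (n : ℕ) (M VC : Type*)
    [AddCommGroup VC] [Module (M → ℂ) VC] (F : CRDeformationFrame n M VC)
    (μ : Fin n → Fin n → M → ℂ) :
    (∀ (α β : Fin n) (p : M), F.theta (F.bracket (F.Zhat μ α) (F.Zhat μ β)) p = 0) ↔
    (∀ (α β : Fin n) (p : M), F.lowerMu μ α β p = F.lowerMu μ β α p) := by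
  simp only [F.theta_bracket_Zhat, Pi.smul_apply, Pi.sub_apply, smul_eq_mul,
    mul_eq_zero, Complex.I_ne_zero, false_or, sub_eq_zero]
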